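/- arXiv:2309.16858 — 7 statements merged into one kernel-verified Lean document; each statement's English description precedes it below -/
import Mathlib

section
/- Let ψ be a sub-root function with fixed point r* (i.e., ψ(r*) = r*, r* > 0). Then for every r ≥ r*, ψ(r) ≤ √(r·r*). -/
/-- If ψ is sub-root with fixed point r* > 0, then ψ(r) ≤ √(r·r*) for all r ≥ r*. -/
theorem subroot_le_sqrt_of_fixedPoint (ψ : ℝ → ℝ)
    (hnn : ∀ r, 0 ≤ r → 0 ≤ ψ r)
    (hmono : ∀ a b, 0 ≤ a → a ≤ b → ψ a ≤ ψ b)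
    (hdec : ∀ a b, 0 < a → a ≤ b → ψ b / Real.sqrt b ≤ ψ a / Real.sqrt a)
    (rstar : ℝ) (hrstar : 0 < rstar) (hfix : ψ rstar = rstar) :
    ∀ r, rstar ≤ r → ψ r ≤ Real.sqrt (r * rstar) := by
  intro r hr
  have hrpos : 0 < r := lt_of_lt_of_le hrstar hr
  have hsr : 0 < Real.sqrt r := Real.sqrt_pos.mpr hrpos
  have h := hdec rstar r hrstar hr
  rw [hfix] at h
  have hstar : rstar / Real.sqrt rstar = Real.sqrt rstar := by
    rw [Real.div_sqrt]
  rw [hstar] at h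
  have : ψ r ≤ Real.sqrt rstar * Real.sqrt r := by
    rw [div_le_iff₀ hsr] at h; linarith [h]
  calc ψ r ≤ Real.sqrt rstar * Real.sqrt r := this
    _ = Real.sqrt (r * rstar) := by
        rw [Real.sqrt_mul hrpos.le, mul_comm]
end

section
/- Let X₁,...,Xₖ be sampled without replacement from a finite population c₁,...,c_N of elements of ℝ^d (i.e., (X₁,...,Xₖ) is a uniformly random ordered k-subset), and Y₁,...,Yₖ be sampled with replacement (i.i.d. uniform on the population). Then for every convex function f : ℝ^d → ℝ, E[f(∑ᵢ Xᵢ)] ≤ E[f(∑ᵢ Yᵢ)]. -/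
/-! The symmetric group `Perm α` of the population acts on samples `K : ι → α` by
post-composition. Summing `F K = f (∑ i, c (K i))` over an orbit, the with-replacement mean is an
average of orbit means, and the injective samples form a single orbit whose mean is the
without-replacement mean. So it suffices that the orbit sum of an injective `π` is minimal.
Every sample lies in the orbit of some `π ∘ J` with `J : ι → ι`, and as `ρ` runs over `Perm ι`
each `ρ (J i)` is uniform on `ι`; hence `∑ i, c (σ (π i))` is the mean over `ρ` of
`∑ i, c (σ (π (ρ (J i))))`, and Jensen's inequality, summed over `σ`, compares the two orbits. -/

open Finset

namespace MulAction

variable {G β M : Type*} [Group G] [Fintype G] [MulAction G β] [AddCommMonoid M]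

theorem sum_smul_eq_of_mem_orbit {x y : β} (hxy : x ∈ orbit G y) (h : β → M) :
    ∑ g : G, h (g • x) = ∑ g : G, h (g • y) := by
  obtain ⟨g₀, rfl⟩ := hxy
  simpa only [Equiv.coe_mulRight, mul_smul] using
    Equiv.sum_comp (Equiv.mulRight g₀) (fun g => h (g • y))

theorem sum_sum_smul_of_smul_mem {s : Finset β} (hs : ∀ g : G, ∀ x ∈ s, g • x ∈ s) (h : β → M) :
    ∑ x ∈ s, ∑ g : G, h (g • x) = Fintype.card G • ∑ x ∈ s, h x := by
  rw [sum_comm, ← card_univ, ← sum_const]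
  refine sum_congr rfl fun g _ => ?_
  exact sum_nbij' (g • ·) (g⁻¹ • ·) (hs g) (hs g⁻¹) (fun x _ => inv_smul_smul g x)
    (fun x _ => smul_inv_smul g x) (fun _ _ => rfl)

theorem card_nsmul_sum_smul_of_subset_orbit {s : Finset β} (hs : ∀ g : G, ∀ x ∈ s, g • x ∈ s)
    {b : β} (hb : ∀ x ∈ s, x ∈ orbit G b) (h : β → M) :
    #s • ∑ g : G, h (g • b) = Fintype.card G • ∑ x ∈ s, h x := by
  rw [← sum_sum_smul_of_smul_mem hs, ← sum_const]
  exact sum_congr rfl fun x hx => (sum_smul_eq_of_mem_orbit (hb x hx) h).symm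

end MulAction

open MulAction

namespace Equiv.Perm

variable {ι α : Type*}

theorem sum_sum_apply_comp [Fintype ι] [DecidableEq ι] {M : Type*} [AddCommMonoid M] (J : ι → ι)
    (c : ι → M) :
    ∑ ρ : Perm ι, ∑ i, c (ρ (J i)) = Fintype.card (Perm ι) • ∑ i, c i := by
  calc ∑ ρ : Perm ι, ∑ i, c (ρ (J i))
      = ∑ i, ∑ ρ : Perm ι, c (ρ (J i)) := sum_comm
    _ = ∑ i, ∑ ρ : Perm ι, c (ρ i) :=
        sum_congr rfl fun i _ => sum_smul_eq_of_mem_orbit (exists_smul_eq _ i (J i)) c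
    _ = ∑ ρ : Perm ι, ∑ i, c (ρ i) := sum_comm
    _ = Fintype.card (Perm ι) • ∑ i, c i := by
        simp only [Equiv.sum_comp, sum_const, card_univ]

theorem mem_orbit_of_injective [Finite ι] {π π' : ι → α} (hπ : Function.Injective π)
    (hπ' : Function.Injective π') : π' ∈ orbit (Perm α) π :=
  let ⟨σ, hσ⟩ := exists_extending_pair π π' hπ hπ'
  ⟨σ, funext hσ⟩

theorem exists_mem_orbit_comp [Fintype ι] [Fintype α] {π : ι → α} (hπ : Function.Injective π)
    (K : ι → α) :
    ∃ J : ι → ι, K ∈ orbit (Perm α) (π ∘ J) := by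
  classical
  obtain ⟨u, hKu, -, hu⟩ := exists_subsuperset_card_eq (subset_univ (univ.image K))
    (card_image_le.trans_eq card_univ)
    ((Fintype.card_le_of_injective π hπ).trans_eq card_univ.symm)
  let e : ι ≃ u := Fintype.equivOfCardEq (by rw [Fintype.card_coe, hu])
  obtain ⟨σ, hσ⟩ := exists_extending_pair π (fun i => (e i : α)) hπ
    (Subtype.val_injective.comp e.injective)
  refine ⟨fun i => e.symm ⟨K i, hKu (mem_image_of_mem K (mem_univ i))⟩, σ, funext fun i => ?_⟩
  simp [hσ]

end Equiv.Perm

open Equiv Equiv.Perm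

namespace ConvexOn

variable {ι α E : Type*} [Fintype ι] [Fintype α] [DecidableEq α] [AddCommGroup E] [Module ℝ E]
  {f : E → ℝ}

theorem sum_perm_smul_injective_le_comp [DecidableEq ι] (hf : ConvexOn ℝ Set.univ f) (c : α → E)
    {π : ι → α} (hπ : Function.Injective π) (J : ι → ι) :
    ∑ σ : Perm α, f (∑ i, c ((σ • π) i)) ≤ ∑ σ : Perm α, f (∑ i, c ((σ • (π ∘ J)) i)) := by
  set r : ℝ := (Fintype.card (Perm ι) : ℝ)⁻¹
  have hr : r * Fintype.card (Perm ι) = 1 := inv_mul_cancel₀ (by positivity)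
  have hmean : ∀ σ : Perm α,
      ∑ i, c ((σ • π) i) = ∑ ρ : Perm ι, r • ∑ i, c ((σ • (π ∘ ρ ∘ J)) i) := by
    intro σ
    rw [← smul_sum]
    simp only [Pi.smul_apply, Function.comp_apply]
    rw [sum_sum_apply_comp J (fun i => c (σ • π i)), ← Nat.cast_smul_eq_nsmul ℝ, smul_smul, hr,
      one_smul]
  have hjensen : ∀ σ : Perm α, f (∑ i, c ((σ • π) i)) ≤
      ∑ ρ : Perm ι, r * f (∑ i, c ((σ • (π ∘ ρ ∘ J)) i)) := by
    intro σ
    rw [hmean σ]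
    exact hf.map_sum_le (fun _ _ => by positivity) (by simp [r]) (fun _ _ => Set.mem_univ _)
  have hshift : ∀ ρ : Perm ι, π ∘ ρ ∘ J ∈ orbit (Perm α) (π ∘ J) := by
    intro ρ
    obtain ⟨τ, hτ⟩ := mem_orbit_of_injective hπ (hπ.comp ρ.injective)
    exact ⟨τ, congrArg (· ∘ J) hτ⟩
  calc ∑ σ : Perm α, f (∑ i, c ((σ • π) i))
      ≤ ∑ σ : Perm α, ∑ ρ : Perm ι, r * f (∑ i, c ((σ • (π ∘ ρ ∘ J)) i)) :=
        sum_le_sum fun σ _ => hjensen σ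
    _ = ∑ ρ : Perm ι, r * ∑ σ : Perm α, f (∑ i, c ((σ • (π ∘ ρ ∘ J)) i)) := by
        rw [sum_comm]; simp only [mul_sum]
    _ = ∑ ρ : Perm ι, r * ∑ σ : Perm α, f (∑ i, c ((σ • (π ∘ J)) i)) := by
        simp only [sum_smul_eq_of_mem_orbit (hshift _) (fun K => f (∑ i, c (K i)))]
    _ = ∑ σ : Perm α, f (∑ i, c ((σ • (π ∘ J)) i)) := by
        rw [sum_const, card_univ, nsmul_eq_mul, ← mul_assoc, mul_comm _ r, hr, one_mul]

theorem sum_perm_smul_injective_le [DecidableEq ι] (hf : ConvexOn ℝ Set.univ f) (c : α → E)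
    {π : ι → α} (hπ : Function.Injective π) (K : ι → α) :
    ∑ σ : Perm α, f (∑ i, c ((σ • π) i)) ≤ ∑ σ : Perm α, f (∑ i, c ((σ • K) i)) := by
  obtain ⟨J, hK⟩ := exists_mem_orbit_comp hπ K
  rw [sum_smul_eq_of_mem_orbit hK (fun K => f (∑ i, c (K i)))]
  exact hf.sum_perm_smul_injective_le_comp c hπ J

theorem sum_injective_div_card_le [DecidableEq ι] (hf : ConvexOn ℝ Set.univ f) (c : α → E)
    (hcard : Fintype.card ι ≤ Fintype.card α) :
    (∑ π ∈ univ.filter (fun π : ι → α => Function.Injective π), f (∑ i, c (π i)))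
        / #(univ.filter (fun π : ι → α => Function.Injective π))
      ≤ (∑ π : ι → α, f (∑ i, c (π i))) / Fintype.card (ι → α) := by
  set F : (ι → α) → ℝ := fun K => f (∑ i, c (K i))
  set I := univ.filter (fun π : ι → α => Function.Injective π)
  obtain ⟨π₀⟩ := Function.Embedding.nonempty_of_card_le hcard
  set m := ∑ σ : Perm α, F (σ • π₀)
  have hI : ∀ σ : Perm α, ∀ π ∈ I, σ • π ∈ I := by
    simp only [I, mem_filter, mem_univ, true_and]
    exact fun σ π hπ => σ.injective.comp hπ
  have hIorbit : ∀ π ∈ I, π ∈ orbit (Perm α) ⇑π₀ := fun π hπ =>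
    mem_orbit_of_injective π₀.injective (mem_filter.mp hπ).2
  have hinj : #I * m = Fintype.card (Perm α) * ∑ π ∈ I, F π := by
    simpa only [nsmul_eq_mul] using card_nsmul_sum_smul_of_subset_orbit hI hIorbit F
  have hall : Fintype.card (ι → α) * m ≤ Fintype.card (Perm α) * ∑ K, F K := by
    calc Fintype.card (ι → α) * m = ∑ K : ι → α, m := by simp
      _ ≤ ∑ K : ι → α, ∑ σ : Perm α, F (σ • K) :=
        sum_le_sum fun K _ => hf.sum_perm_smul_injective_le c π₀.injective K
      _ = Fintype.card (Perm α) * ∑ K, F K := by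
        rw [sum_sum_smul_of_smul_mem (by simp), nsmul_eq_mul]
  have hIpos : (0 : ℝ) < #I := Nat.cast_pos.mpr (card_pos.mpr ⟨π₀, by simp [I, π₀.injective]⟩)
  have hpos : (0 : ℝ) < Fintype.card (ι → α) := Nat.cast_pos.mpr (Fintype.card_pos_iff.mpr ⟨π₀⟩)
  have hG : (0 : ℝ) < Fintype.card (Perm α) := by positivity
  calc (∑ π ∈ I, F π) / #I = m / Fintype.card (Perm α) := by
        rw [div_eq_div_iff hIpos.ne' hG.ne']; linarith
    _ ≤ (∑ K, F K) / Fintype.card (ι → α) := by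
        rw [div_le_div_iff₀ hG hpos]; linarith

end ConvexOn

theorem hoeffding_sampling_without_replacement_general (N k d : ℕ) (hk : k ≤ N)
    (c : Fin N → (Fin d → ℝ)) (f : (Fin d → ℝ) → ℝ)
    (hf : ConvexOn ℝ Set.univ f) :
    (∑ π ∈ Finset.univ.filter (fun π : Fin k → Fin N => Function.Injective π),
        f (∑ i, c (π i)))
      / ((Finset.univ.filter (fun π : Fin k → Fin N => Function.Injective π)).card : ℝ)
    ≤ (∑ π : Fin k → Fin N, f (∑ i, c (π i))) / ((N : ℝ) ^ k) := by
  simpa using hf.sum_injective_div_card_le (ι := Fin k) c (by simpa using hk)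

/-- Hoeffding's comparison: for a convex f, the expectation of f of the sum of a
sample drawn uniformly without replacement is at most that of a sample drawn
with replacement. -/
theorem hoeffding_sampling_without_replacement (N k d : ℕ) (hN : 0 < N) (hk : k ≤ N)
    (c : Fin N → (Fin d → ℝ)) (f : (Fin d → ℝ) → ℝ)
    (hf : ConvexOn ℝ Set.univ f) :
    (∑ π ∈ Finset.univ.filter (fun π : Fin k → Fin N => Function.Injective π),
        f (∑ i, c (π i)))
      / ((Finset.univ.filter (fun π : Fin k → Fin N => Function.Injective π)).card : ℝ)
    ≤ (∑ π : Fin k → Fin N, f (∑ i, c (π i))) / ((N : ℝ) ^ k) :=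
  hoeffding_sampling_without_replacement_general N k d hk c f hf
end

section
/- Let H be a finite class of functions h : [n] → ℝ and let Z be a uniformly random subset of [n] of size u. Define the transductive complexity R⁺_u(H) = E[ sup_{h∈H} ( (1/u) ∑_{i∈Z} h(i) − (1/n) ∑_{i=1}^n h(i) ) ]. Let Y₁,...,Y_u be i.i.d. uniform on [n] and σ₁,...,σ_u i.i.d. Rademacher, and define the inductive Rademacher complexity R^{ind}_u(H) = E[ sup_{h∈H} (1/u) ∑_{i=1}^u σᵢ h(Yᵢ) ]. Then R⁺_u(H) ≤ 2 R^{ind}_u(H). -/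
/-!
Sampling without replacement is dominated by sampling with replacement (Hoeffding). Couple a
uniform sample `Y ∈ [n]^u` with a `u`-set `Z` drawn uniformly among the `u`-sets containing the
range of `Y`. By symmetry under permutations of `[n]`, `Z` is then uniform, and given `Z` each `Yᵢ`
is uniform on `Z`. So the transductive deviation of `h` is a conditional mean of the inductive
deviation `(1/u) ∑ᵢ h(Yᵢ) - (1/n) ∑ h`, and a supremum of means is at most the mean of the suprema.

The inductive deviation is then symmetrized as usual: write `(1/n) ∑ h` as a mean over a ghost
sample `Y'`, exchange `Yᵢ` and `Y'ᵢ` wherever `σᵢ` is false, and split the supremum into two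
Rademacher suprema, one for `σ` and one for `!σ`.
-/

open Finset Equiv
open scoped Pointwise

section Supremum

variable {β : Type*} {H : Finset β} (hH : H.Nonempty)

theorem sup'_add_le_add_sup' (f g : β → ℝ) :
    H.sup' hH (fun h => f h + g h) ≤ H.sup' hH f + H.sup' hH g :=
  sup'_le _ _ fun _ hh => add_le_add (le_sup' f hh) (le_sup' g hh)

theorem sup'_sum_le_sum_sup' {κ : Type*} (t : Finset κ) (g : κ → β → ℝ) :
    H.sup' hH (fun h => ∑ y ∈ t, g y h) ≤ ∑ y ∈ t, H.sup' hH (g y) :=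
  sup'_le _ _ fun _ hh => sum_le_sum fun y _ => le_sup' (g y) hh

/-- `ν / #t` is a coupling of the uniform laws on `t` and `s` under which `f x` is the conditional
mean of `g y` given `x`. -/
theorem div_card_sum_sup'_le_of_coupling {ι κ : Type*} {s : Finset ι} {t : Finset κ}
    (ht : t.Nonempty) {f : ι → β → ℝ} {g : κ → β → ℝ} {ν : κ → ι → ℝ} {c : ℝ}
    (hν : ∀ y x, 0 ≤ ν y x) (hrow : ∀ y ∈ t, ∑ x ∈ s, ν y x = 1)
    (hcol : ∀ x ∈ s, ∑ y ∈ t, ν y x = c)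
    (hmean : ∀ x ∈ s, ∀ h ∈ H, ∑ y ∈ t, ν y x * g y h = c * f x h) :
    (∑ x ∈ s, H.sup' hH (f x)) / #s ≤ (∑ y ∈ t, H.sup' hH (g y)) / #t := by
  have hcard : c * #s = #t := by
    calc c * #s = ∑ x ∈ s, ∑ y ∈ t, ν y x := by simp [sum_congr rfl hcol, mul_comm]
      _ = #t := by rw [sum_comm]; simp [sum_congr rfl hrow]
  have hjensen : ∀ x ∈ s, c * H.sup' hH (f x) ≤ ∑ y ∈ t, ν y x * H.sup' hH (g y) := by
    intro x hx
    obtain ⟨h, hh, hmax⟩ := exists_mem_eq_sup' hH (f x)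
    rw [hmax, ← hmean x hx h hh]
    exact sum_le_sum fun y _ => mul_le_mul_of_nonneg_left (le_sup' (g y) hh) (hν y x)
  have hsum : c * ∑ x ∈ s, H.sup' hH (f x) ≤ ∑ y ∈ t, H.sup' hH (g y) :=
    calc c * ∑ x ∈ s, H.sup' hH (f x) ≤ ∑ x ∈ s, ∑ y ∈ t, ν y x * H.sup' hH (g y) := by
          rw [mul_sum]; exact sum_le_sum hjensen
      _ = ∑ y ∈ t, H.sup' hH (g y) := by
          rw [sum_comm]; refine sum_congr rfl fun y hy => ?_
          rw [← sum_mul, hrow y hy, one_mul]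
  have ht' : (0 : ℝ) < #t := by exact_mod_cast ht.card_pos
  have hs : (0 : ℝ) < #s := by
    refine lt_of_le_of_ne (by positivity) fun h => ?_
    rw [← h, mul_zero] at hcard
    linarith
  rw [div_le_div_iff₀ hs ht', ← hcard, ← mul_assoc, mul_comm _ c]
  exact mul_le_mul_of_nonneg_right hsum hs.le

end Supremum

section WithoutReplacement

variable {α : Type*} [Fintype α] [DecidableEq α]

def supersetCount (u : ℕ) (S : Finset α) : ℕ := #{Z ∈ powersetCard u univ | S ⊆ Z}

variable {u : ℕ}

/-- The conditional law of the `u`-set `Z` given the sample `Y`: uniform over the `u`-sets that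
contain the range of `Y`. -/
noncomputable def couplingWeight (Y : Fin u → α) (Z : Finset α) : ℝ :=
  if univ.image Y ⊆ Z then (supersetCount u (univ.image Y) : ℝ)⁻¹ else 0

theorem supersetCount_smul (π : Perm α) (S : Finset α) :
    supersetCount u (π • S) = supersetCount u S := by
  refine card_nbij' (π⁻¹ • ·) (π • ·) ?_ ?_ ?_ ?_ <;> intro Z hZ <;>
    simp_all [card_smul_finset, subset_smul_finset_iff]

theorem supersetCount_pos (hu : u ≤ Fintype.card α) {S : Finset α} (hS : #S ≤ u) :
    0 < supersetCount u S := by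
  obtain ⟨Z, hSZ, -, hZ⟩ := exists_subsuperset_card_eq S.subset_univ hS (by simpa using hu)
  exact card_pos.2 ⟨Z, by simp [hZ, hSZ]⟩

theorem couplingWeight_nonneg (Y : Fin u → α) (Z : Finset α) : 0 ≤ couplingWeight Y Z := by
  unfold couplingWeight; split <;> positivity

theorem couplingWeight_eq_zero_of_notMem {Y : Fin u → α} {Z : Finset α} {i : Fin u}
    (h : Y i ∉ Z) : couplingWeight Y Z = 0 :=
  if_neg fun hsub => h (hsub (mem_image_of_mem Y (mem_univ i)))

theorem couplingWeight_smul (π : Perm α) (Y : Fin u → α) (Z : Finset α) :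
    couplingWeight (π • Y) (π • Z) = couplingWeight Y Z := by
  have himage : univ.image (π • Y) = π • univ.image Y := by
    rw [smul_finset_def, image_image]; rfl
  simp only [couplingWeight, himage, smul_finset_subset_smul_finset_iff, supersetCount_smul]

theorem sum_couplingWeight_powersetCard (hu : u ≤ Fintype.card α) (Y : Fin u → α) :
    ∑ Z ∈ powersetCard u univ, couplingWeight Y Z = 1 := by
  have hpos := supersetCount_pos hu (card_image_le.trans_eq (card_fin u) : #(univ.image Y) ≤ u)
  simp only [couplingWeight]
  rw [← sum_filter, sum_const, nsmul_eq_mul]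
  exact mul_inv_cancel₀ (Nat.cast_ne_zero.2 hpos.ne')

theorem sum_couplingWeight_smul (π : Perm α) (Z : Finset α) :
    ∑ Y : Fin u → α, couplingWeight Y (π • Z) = ∑ Y : Fin u → α, couplingWeight Y Z := by
  rw [← (MulAction.bijective π).sum_comp]
  simp only [couplingWeight_smul]

theorem sum_couplingWeight_eq_of_card_eq {Z Z' : Finset α} (h : #Z = #Z') :
    ∑ Y : Fin u → α, couplingWeight Y Z = ∑ Y : Fin u → α, couplingWeight Y Z' := by
  obtain ⟨π, hπ⟩ := (Set.powersetCard.isPretransitive (α := α) (n := #Z)).exists_smul_eq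
    (Set.powersetCard.ofCard rfl) (Set.powersetCard.ofCard h.symm)
  have hπZ : π • Z = Z' := congrArg Subtype.val hπ
  rw [← hπZ, sum_couplingWeight_smul]

theorem sum_couplingWeight_apply_eq_of_mem {Z : Finset α} (i : Fin u) {z z' : α}
    (hz : z ∈ Z) (hz' : z' ∈ Z) :
    ∑ Y : Fin u → α with Y i = z, couplingWeight Y Z
      = ∑ Y : Fin u → α with Y i = z', couplingWeight Y Z := by
  set π := swap z z'
  have hπZ : π • Z = Z := by
    ext a
    rw [← inv_smul_mem_iff, swap_inv, Perm.smul_def, swap_apply_def]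
    split_ifs <;> simp_all
  rw [sum_filter, sum_filter, ← (MulAction.bijective π).sum_comp]
  conv_lhs => rw [← hπZ]
  simp only [couplingWeight_smul, Pi.smul_apply, Perm.smul_def, π, swap_apply_eq_iff,
    swap_apply_left]

theorem sum_couplingWeight_mul_apply (Z : Finset α) (i : Fin u) (φ : α → ℝ) :
    ∑ Y : Fin u → α, couplingWeight Y Z * φ (Y i)
      = ∑ z ∈ Z, φ z * ∑ Y : Fin u → α with Y i = z, couplingWeight Y Z := by
  simp only [sum_filter, mul_sum, mul_ite, mul_zero]
  rw [sum_comm]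
  refine sum_congr rfl fun Y _ => ?_
  rw [sum_ite_eq]
  split_ifs with h
  · ring
  · rw [couplingWeight_eq_zero_of_notMem h, zero_mul]

theorem card_mul_sum_couplingWeight_apply {Z : Finset α} (hZ : #Z = u) (i : Fin u)
    {z : α} (hz : z ∈ Z) :
    u * ∑ Y : Fin u → α with Y i = z, couplingWeight Y Z = ∑ Y : Fin u → α, couplingWeight Y Z := by
  calc (u : ℝ) * ∑ Y : Fin u → α with Y i = z, couplingWeight Y Z
      = ∑ z' ∈ Z, ∑ Y : Fin u → α with Y i = z', couplingWeight Y Z := by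
        rw [sum_congr rfl fun z' hz' => sum_couplingWeight_apply_eq_of_mem i hz' hz, sum_const, hZ,
          nsmul_eq_mul]
    _ = ∑ Y : Fin u → α, couplingWeight Y Z := by
        simpa using (sum_couplingWeight_mul_apply Z i 1).symm

theorem sum_couplingWeight_mul_sum_apply {Z : Finset α} (hZ : #Z = u) (h : α → ℝ) :
    ∑ Y : Fin u → α, couplingWeight Y Z * ∑ i, h (Y i)
      = (∑ Y : Fin u → α, couplingWeight Y Z) * ∑ z ∈ Z, h z := by
  obtain rfl | hu := u.eq_zero_or_pos
  · simp [card_eq_zero.1 hZ]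
  refine mul_left_cancel₀ (Nat.cast_ne_zero.2 hu.ne' : (u : ℝ) ≠ 0) ?_
  calc (u : ℝ) * ∑ Y : Fin u → α, couplingWeight Y Z * ∑ i, h (Y i)
      = u * ∑ i, ∑ z ∈ Z, h z * ∑ Y : Fin u → α with Y i = z, couplingWeight Y Z := by
        rw [sum_congr rfl fun i _ => (sum_couplingWeight_mul_apply Z i h).symm, sum_comm]
        simp only [mul_sum]
    _ = ∑ i : Fin u, ∑ z ∈ Z, h z * ∑ Y : Fin u → α, couplingWeight Y Z := by
        rw [mul_sum]
        refine sum_congr rfl fun i _ => ?_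
        rw [mul_sum]
        refine sum_congr rfl fun z hz => ?_
        rw [← card_mul_sum_couplingWeight_apply hZ i hz]
        ring
    _ = u * ((∑ Y : Fin u → α, couplingWeight Y Z) * ∑ z ∈ Z, h z) := by
        simp [← sum_mul, mul_comm]

theorem sum_sup'_powersetCard_div_le (hu : u ≤ Fintype.card α) {H : Finset (α → ℝ)}
    (hH : H.Nonempty) :
    (∑ Z ∈ powersetCard u univ,
        H.sup' hH (fun h => (∑ i ∈ Z, h i) / u - (∑ a, h a) / Fintype.card α))
      / #(powersetCard u (univ : Finset α))
    ≤ (∑ Y : Fin u → α,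
        H.sup' hH (fun h => (∑ i, h (Y i)) / u - (∑ a, h a) / Fintype.card α))
      / (Fintype.card α : ℝ) ^ u := by
  have hne : (univ : Finset (Fin u → α)).Nonempty := by
    obtain rfl | hpos := u.eq_zero_or_pos
    · exact univ_nonempty_iff.2 ⟨finZeroElim⟩
    · have : Nonempty α := Fintype.card_pos_iff.1 (hpos.trans_le hu)
      exact univ_nonempty
  obtain ⟨Z₀, -, hZ₀⟩ := exists_subset_card_eq (s := (univ : Finset α)) (by simpa using hu)
  have hcol : ∀ Z ∈ powersetCard u univ,
      ∑ Y : Fin u → α, couplingWeight Y Z = ∑ Y : Fin u → α, couplingWeight Y Z₀ :=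
    fun Z hZ => sum_couplingWeight_eq_of_card_eq ((mem_powersetCard_univ.1 hZ).trans hZ₀.symm)
  rw [show (Fintype.card α : ℝ) ^ u = #(univ : Finset (Fin u → α)) by simp]
  refine div_card_sum_sup'_le_of_coupling hH hne couplingWeight_nonneg
    (fun Y _ => sum_couplingWeight_powersetCard hu Y) hcol fun Z hZ h _ => ?_
  simp only [mul_sub, sum_sub_distrib, ← sum_mul, mul_div_assoc', ← sum_div,
    sum_couplingWeight_mul_sum_apply (mem_powersetCard_univ.1 hZ), hcol Z hZ]

end WithoutReplacement

section Symmetrization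

variable {α : Type*} {u : ℕ}

theorem sum_sum_apply_div_pow [Fintype α] [Nonempty α] (hu : 0 < u) (h : α → ℝ) :
    (∑ Y : Fin u → α, (∑ i, h (Y i)) / u) / (Fintype.card α : ℝ) ^ u
      = (∑ a, h a) / Fintype.card α := by
  have hsum : ∑ Y : Fin u → α, ∑ i, h (Y i) = u * ((Fintype.card α : ℝ) ^ (u - 1) * ∑ a, h a) := by
    rw [sum_comm]
    simp [← Fintype.piFinset_univ, Fintype.sum_piFinset_apply]
  have hn : (Fintype.card α : ℝ) ≠ 0 := by positivity
  have hpow : (Fintype.card α : ℝ) ^ u = (Fintype.card α : ℝ) ^ (u - 1) * Fintype.card α := by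
    rw [← pow_succ, Nat.sub_add_cancel hu]
  rw [← sum_div, hsum, hpow]
  field_simp

noncomputable def rademacherSup (H : Finset (α → ℝ)) (hH : H.Nonempty) (Y : Fin u → α)
    (σ : Fin u → Bool) : ℝ :=
  H.sup' hH fun h => (∑ i, (if σ i then (1 : ℝ) else -1) * h (Y i)) / u

variable {H : Finset (α → ℝ)} (hH : H.Nonempty)

theorem card_pow_mul_sup'_sub_mean_le [Fintype α] [Nonempty α] (hu : 0 < u) (Y : Fin u → α) :
    (Fintype.card α : ℝ) ^ u * H.sup' hH (fun h => (∑ i, h (Y i)) / u - (∑ a, h a) / Fintype.card α)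
      ≤ ∑ Y' : Fin u → α, H.sup' hH (fun h => (∑ i, (h (Y i) - h (Y' i))) / u) := by
  rw [mul₀_sup' (by positivity)]
  refine le_of_eq_of_le (sup'_congr hH rfl fun h _ => ?_) (sup'_sum_le_sum_sup' hH _ _)
  rw [← sum_sum_apply_div_pow hu h]
  simp only [sum_sub_distrib, sub_div, sum_const, card_univ, Fintype.card_fun, Fintype.card_fin]
  rw [nsmul_eq_mul, Nat.cast_pow, mul_sub, mul_div_cancel₀ _ (by positivity)]

theorem sup'_sub_le_rademacherSup_add (σ : Fin u → Bool) (A B : Fin u → α) :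
    H.sup' hH (fun h => (∑ i, (h (if σ i then A i else B i) - h (if σ i then B i else A i))) / u)
      ≤ rademacherSup H hH A σ + rademacherSup H hH B (fun i => !σ i) := by
  refine le_of_eq_of_le (sup'_congr hH rfl fun h _ => ?_) (sup'_add_le_add_sup' hH _ _)
  rw [← add_div, ← sum_add_distrib]
  congr 1
  refine sum_congr rfl fun i _ => ?_
  cases hσ : σ i <;> simp [hσ] <;> ring

theorem sum_sup'_sub_le [Fintype α] (σ : Fin u → Bool) :
    ∑ Y : Fin u → α, ∑ Y' : Fin u → α, H.sup' hH (fun h => (∑ i, (h (Y i) - h (Y' i))) / u)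
      ≤ (Fintype.card α : ℝ) ^ u * (∑ Y, rademacherSup H hH Y σ
        + ∑ Y, rademacherSup H hH Y (fun i => !σ i)) := by
  set swapOn : (Fin u → α) × (Fin u → α) → (Fin u → α) × (Fin u → α) :=
    fun p => (fun i => if σ i then p.1 i else p.2 i, fun i => if σ i then p.2 i else p.1 i)
  have hswap : Function.Involutive swapOn := fun p => by
    ext i <;> by_cases σ i <;> simp [swapOn, *]
  rw [← Fintype.sum_prod_type', ← hswap.bijective.sum_comp]
  calc ∑ p, H.sup' hH (fun h => (∑ i, (h ((swapOn p).1 i) - h ((swapOn p).2 i))) / u)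
      ≤ ∑ p : (Fin u → α) × (Fin u → α),
          (rademacherSup H hH p.1 σ + rademacherSup H hH p.2 (fun i => !σ i)) :=
        sum_le_sum fun p _ => sup'_sub_le_rademacherSup_add hH σ p.1 p.2
    _ = _ := by
        rw [sum_add_distrib, Fintype.sum_prod_type, Fintype.sum_prod_type]
        simp [mul_add, mul_sum]

theorem sum_rademacherSup_not (Y : Fin u → α) :
    ∑ σ : Fin u → Bool, rademacherSup H hH Y (fun i => !σ i)
      = ∑ σ : Fin u → Bool, rademacherSup H hH Y σ :=
  (Function.Involutive.bijective (f := fun (σ : Fin u → Bool) i => !σ i)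
    fun σ => by simp).sum_comp _

theorem sum_sup'_sub_mean_div_le [Fintype α] [Nonempty α] (hu : 0 < u) :
    (∑ Y : Fin u → α, H.sup' hH (fun h => (∑ i, h (Y i)) / u - (∑ a, h a) / Fintype.card α))
      / (Fintype.card α : ℝ) ^ u
    ≤ 2 * ((∑ Y : Fin u → α, ∑ σ : Fin u → Bool, rademacherSup H hH Y σ)
      / ((Fintype.card α : ℝ) ^ u * 2 ^ u)) := by
  set N := (Fintype.card α : ℝ) ^ u
  set S := ∑ Y : Fin u → α,
    H.sup' hH (fun h => (∑ i, h (Y i)) / u - (∑ a, h a) / Fintype.card α)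
  set T := ∑ Y : Fin u → α, ∑ σ : Fin u → Bool, rademacherSup H hH Y σ
  set D := ∑ Y : Fin u → α, ∑ Y' : Fin u → α,
    H.sup' hH (fun h => (∑ i, (h (Y i) - h (Y' i))) / u)
  have hghost : N * S ≤ D := by
    rw [mul_sum]
    exact sum_le_sum fun Y _ => card_pow_mul_sup'_sub_mean_le hH hu Y
  have hsymm : 2 ^ u * D ≤ 2 * N * T := by
    have hT : ∑ σ : Fin u → Bool, ∑ Y, rademacherSup H hH Y σ = T := sum_comm
    have hT' : ∑ σ : Fin u → Bool, ∑ Y, rademacherSup H hH Y (fun i => !σ i) = T := by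
      rw [sum_comm]
      exact sum_congr rfl fun Y _ => sum_rademacherSup_not hH Y
    calc 2 ^ u * D = ∑ σ : Fin u → Bool, D := by simp
      _ ≤ ∑ σ : Fin u → Bool, N * (∑ Y, rademacherSup H hH Y σ
            + ∑ Y, rademacherSup H hH Y (fun i => !σ i)) :=
          sum_le_sum fun σ _ => sum_sup'_sub_le hH σ
      _ = 2 * N * T := by
          rw [← mul_sum, sum_add_distrib, hT, hT']
          ring
  rw [div_le_iff₀ (by positivity), mul_div_assoc', div_mul_eq_mul_div,
    le_div_iff₀ (by positivity)]
  calc S * (N * 2 ^ u) = 2 ^ u * (N * S) := by ring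
    _ ≤ 2 ^ u * D := by gcongr
    _ ≤ 2 * N * T := hsymm
    _ = 2 * T * N := by ring

end Symmetrization

theorem transductive_le_two_inductive_general (n u : ℕ) (hu : 0 < u) (hun : u ≤ n)
    (H : Finset (Fin n → ℝ)) (hH : H.Nonempty) :
    (∑ Z ∈ (Finset.univ : Finset (Fin n)).powersetCard u,
        H.sup' hH (fun h => (∑ i ∈ Z, h i) / (u : ℝ) - (∑ i, h i) / (n : ℝ)))
      / (((Finset.univ : Finset (Fin n)).powersetCard u).card : ℝ)
    ≤ 2 * ((∑ Y : Fin u → Fin n, ∑ σ : Fin u → Bool,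
          H.sup' hH (fun h => (∑ i, (if σ i then (1 : ℝ) else -1) * h (Y i)) / (u : ℝ)))
        / ((n : ℝ) ^ u * 2 ^ u)) := by
  have : Nonempty (Fin n) := ⟨⟨0, hu.trans_le hun⟩⟩
  have hsample := sum_sup'_powersetCard_div_le (α := Fin n) (by simpa using hun) hH
  have hsymm := sum_sup'_sub_mean_div_le (α := Fin n) hH hu
  simp only [Fintype.card_fin] at hsample hsymm
  exact hsample.trans hsymm

/-- The transductive complexity is bounded by twice the inductive Rademacher
complexity: R⁺_u(H) ≤ 2 R^{ind}_u(H). -/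
theorem transductive_le_two_inductive (n u : ℕ) (hn : 0 < n) (hu : 0 < u) (hun : u ≤ n)
    (H : Finset (Fin n → ℝ)) (hH : H.Nonempty) :
    (∑ Z ∈ (Finset.univ : Finset (Fin n)).powersetCard u,
        H.sup' hH (fun h => (∑ i ∈ Z, h i) / (u : ℝ) - (∑ i, h i) / (n : ℝ)))
      / (((Finset.univ : Finset (Fin n)).powersetCard u).card : ℝ)
    ≤ 2 * ((∑ Y : Fin u → Fin n, ∑ σ : Fin u → Bool,
          H.sup' hH (fun h => (∑ i, (if σ i then (1 : ℝ) else -1) * h (Y i)) / (u : ℝ)))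
        / ((n : ℝ) ^ u * 2 ^ u)) :=
  transductive_le_two_inductive_general n u hu hun H hH
end

section
/- Let H be a finite class of functions h : [n] → ℝ and Z a uniformly random u-subset of [n]. Then E[ sup_{h∈H} ( (1/u) ∑_{i∈Z} h(i) − (1/n) ∑_{i=1}^n h(i) ) ] ≤ E[ sup_{h∈H} ( (1/u) ∑_{j=1}^{u} h(Y_j) − (1/n) ∑_{i=1}^n h(i) ) ], where Y₁,...,Y_u are i.i.d. uniform on [n]. -/
/-! Couple the two samplings: given the with-replacement sample `Y`, let `Z` be a uniformly
random `u`-subset containing the range of `Y`. By symmetry under permutations of `Fin n`, `Z` is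
then uniform, and conditionally on `Z` every element of `Z` is hit by `Y` once on average, so the
conditional expectation of the empirical mean over `Y` is the mean over `Z`. A supremum of
averages is at most the average of the suprema, which gives the inequality. -/

open Finset
open scoped Pointwise

theorem Finset.mul_sup'_le_sum_mul_sup' {β ι R : Type*} [Semiring R] [LinearOrder R]
    [IsOrderedRing R] {s : Finset β} (hs : s.Nonempty) {t : Finset ι} {c : R} {w : ι → R}
    {F : β → R} {G : β → ι → R} (hw : ∀ i ∈ t, 0 ≤ w i)
    (hF : ∀ b ∈ s, c * F b = ∑ i ∈ t, w i * G b i) :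
    c * s.sup' hs F ≤ ∑ i ∈ t, w i * s.sup' hs (G · i) := by
  obtain ⟨b, hb, hmax⟩ := exists_mem_eq_sup' hs F
  rw [hmax, hF b hb]
  exact sum_le_sum fun i hi => mul_le_mul_of_nonneg_left (le_sup' (G · i) hb) (hw i hi)

theorem Finset.mul_sum_le_sum_of_sum_weight_eq_one {β ι R : Type*} [Semiring R] [PartialOrder R]
    [IsOrderedRing R] {s : Finset β} {t : Finset ι} {c : R} {w : β → ι → R} {F : β → R}
    {G : ι → R} (hw : ∀ i ∈ t, ∑ b ∈ s, w b i = 1)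
    (hF : ∀ b ∈ s, c * F b ≤ ∑ i ∈ t, w b i * G i) :
    c * ∑ b ∈ s, F b ≤ ∑ i ∈ t, G i :=
  calc c * ∑ b ∈ s, F b ≤ ∑ b ∈ s, ∑ i ∈ t, w b i * G i := by
        rw [mul_sum]; exact sum_le_sum hF
    _ = ∑ i ∈ t, G i := by
      rw [sum_comm]
      exact sum_congr rfl fun i hi => by rw [← sum_mul, hw i hi, one_mul]

theorem Finset.exists_perm_smul_eq_of_card_eq {α : Type*} [DecidableEq α] {s t : Finset α}
    (h : #s = #t) : ∃ σ : Equiv.Perm α, σ • s = t := by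
  have := Set.powersetCard.isPretransitive (α := α) (n := #t)
  obtain ⟨σ, hσ⟩ := MulAction.exists_smul_eq (Equiv.Perm α)
    (⟨s, h⟩ : Set.powersetCard α #t) ⟨t, rfl⟩
  exact ⟨σ, congrArg Subtype.val hσ⟩

namespace HoeffdingCoupling

variable {α : Type*} [Fintype α] [DecidableEq α] (u : ℕ)

-- The conditional law of `Z` given `Y`: uniform on the `u`-subsets containing the range of `Y`,
-- of which there are `choose (card α - k) (u - k)` when that range has `k` elements.
noncomputable def couplingWeight (Z : Finset α) (Y : Fin u → α) : ℝ :=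
  if univ.image Y ⊆ Z then
    ((Fintype.card α - #(univ.image Y)).choose (u - #(univ.image Y)) : ℝ)⁻¹
  else 0

noncomputable def couplingMass (Z : Finset α) : ℝ := ∑ Y : Fin u → α, couplingWeight u Z Y

noncomputable def couplingVisits (Z : Finset α) (i : α) : ℝ :=
  ∑ Y : Fin u → α, couplingWeight u Z Y * #{j | Y j = i}

variable {u}

theorem couplingWeight_nonneg (Z : Finset α) (Y : Fin u → α) : 0 ≤ couplingWeight u Z Y := by
  unfold couplingWeight; split <;> positivity

theorem sum_couplingWeight (hu : u ≤ Fintype.card α) (Y : Fin u → α) :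
    ∑ Z ∈ univ.powersetCard u, couplingWeight u Z Y = 1 := by
  have hY : #(univ.image Y) ≤ u := card_image_le.trans (card_fin u).le
  simp only [couplingWeight]
  rw [← sum_filter, sum_const, card_filter_powersetCard_subset _ _ _ (subset_univ _) hY,
    card_univ, nsmul_eq_mul, mul_inv_cancel₀]
  exact_mod_cast (Nat.choose_pos (by omega)).ne'

theorem couplingWeight_smul (σ : Equiv.Perm α) (Z : Finset α) (Y : Fin u → α) :
    couplingWeight u (σ • Z) (σ • Y) = couplingWeight u Z Y := by
  have himage : univ.image (σ • Y) = σ • univ.image Y := by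
    rw [← image_smul, image_image]; rfl
  simp only [couplingWeight, himage, card_smul_finset, smul_finset_subset_smul_finset_iff]

theorem couplingMass_smul (σ : Equiv.Perm α) (Z : Finset α) :
    couplingMass u (σ • Z) = couplingMass u Z := by
  unfold couplingMass
  rw [← Equiv.sum_comp (MulAction.toPerm σ : Equiv.Perm (Fin u → α))]
  exact sum_congr rfl fun Y _ => couplingWeight_smul σ Z Y

theorem couplingMass_eq (hu : u ≤ Fintype.card α) {Z : Finset α} (hZ : #Z = u) :
    couplingMass u Z = Fintype.card α ^ u / (Fintype.card α).choose u := by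
  have hconst :
      ∀ Z' ∈ (univ : Finset α).powersetCard u, couplingMass u Z' = couplingMass u Z := by
    intro Z' hZ'
    obtain ⟨σ, rfl⟩ :=
      Finset.exists_perm_smul_eq_of_card_eq (hZ.trans (mem_powersetCard.1 hZ').2.symm)
    exact couplingMass_smul σ Z
  have htotal :
      ∑ Z' ∈ (univ : Finset α).powersetCard u, couplingMass u Z' = Fintype.card α ^ u := by
    unfold couplingMass
    rw [sum_comm, sum_congr rfl fun Y _ => sum_couplingWeight hu Y]
    simp
  rw [sum_congr rfl hconst, sum_const, card_powersetCard, card_univ, nsmul_eq_mul] at htotal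
  have hchoose : ((Fintype.card α).choose u : ℝ) ≠ 0 := by
    exact_mod_cast (Nat.choose_pos hu).ne'
  rw [← htotal, mul_div_cancel_left₀ _ hchoose]

theorem couplingVisits_smul (σ : Equiv.Perm α) (Z : Finset α) (i : α) :
    couplingVisits u (σ • Z) (σ • i) = couplingVisits u Z i := by
  unfold couplingVisits
  rw [← Equiv.sum_comp (MulAction.toPerm σ : Equiv.Perm (Fin u → α))]
  refine sum_congr rfl fun Y _ => ?_
  simp only [MulAction.toPerm_apply, couplingWeight_smul, Pi.smul_apply, smul_left_cancel_iff]

theorem couplingVisits_eq_zero {Z : Finset α} {i : α} (hi : i ∉ Z) :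
    couplingVisits u Z i = 0 := by
  refine sum_eq_zero fun Y _ => ?_
  unfold couplingWeight
  split_ifs with hY
  · have hnone : ∀ j, Y j ≠ i := fun j hj => hi (hY (hj ▸ mem_image_of_mem Y (mem_univ j)))
    simp [hnone]
  · rw [zero_mul]

theorem sum_couplingWeight_mul_sum (Z : Finset α) (g : α → ℝ) :
    ∑ Y : Fin u → α, couplingWeight u Z Y * ∑ j, g (Y j)
      = ∑ i, couplingVisits u Z i * g i := by
  have hfiber (Y : Fin u → α) : ∑ j, g (Y j) = ∑ i, (#{j | Y j = i} : ℝ) * g i := by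
    rw [← sum_fiberwise' univ Y g]
    simp only [sum_const, nsmul_eq_mul]
  simp only [couplingVisits, hfiber, mul_sum, sum_mul, mul_assoc]
  exact sum_comm

theorem couplingVisits_eq_couplingMass {Z : Finset α} (hZ : #Z = u) {i : α} (hi : i ∈ Z) :
    couplingVisits u Z i = couplingMass u Z := by
  have hconst : ∀ i' ∈ Z, couplingVisits u Z i' = couplingVisits u Z i := by
    intro i' hi'
    have hswap : Equiv.swap i' i • Z = Z := by
      ext x
      rw [← Equiv.swap_inv, mem_inv_smul_finset_iff, Equiv.Perm.smul_def, Equiv.swap_apply_def]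
      split_ifs <;> simp_all
    have := couplingVisits_smul (u := u) (Equiv.swap i' i) Z i'
    rwa [hswap, Equiv.Perm.smul_def, Equiv.swap_apply_left, eq_comm] at this
  have hsum : ∑ i', couplingVisits u Z i' = u * couplingMass u Z := by
    simpa [couplingMass, mul_sum, mul_comm] using
      (sum_couplingWeight_mul_sum (u := u) Z fun _ => 1).symm
  rw [← sum_subset (subset_univ Z) fun i' _ hi' => couplingVisits_eq_zero hi',
    sum_congr rfl hconst, sum_const, hZ, nsmul_eq_mul] at hsum
  have hu : (u : ℝ) ≠ 0 := by exact_mod_cast hZ ▸ card_ne_zero_of_mem hi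
  exact mul_left_cancel₀ hu hsum

theorem sum_couplingWeight_mul_sum_eq {Z : Finset α} (hZ : #Z = u) (g : α → ℝ) :
    ∑ Y : Fin u → α, couplingWeight u Z Y * ∑ j, g (Y j)
      = couplingMass u Z * ∑ i ∈ Z, g i := by
  rw [sum_couplingWeight_mul_sum, mul_sum,
    ← sum_subset (subset_univ Z) fun i _ hi => by rw [couplingVisits_eq_zero hi, zero_mul]]
  exact sum_congr rfl fun i hi => by rw [couplingVisits_eq_couplingMass hZ hi]

theorem sum_couplingWeight_mul_centered {Z : Finset α} (hZ : #Z = u) (g : α → ℝ) (m : ℝ) :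
    ∑ Y : Fin u → α, couplingWeight u Z Y * ((∑ j, g (Y j)) / u - m)
      = couplingMass u Z * ((∑ i ∈ Z, g i) / u - m) := by
  rw [mul_sub, mul_div_assoc', ← sum_couplingWeight_mul_sum_eq hZ, couplingMass, sum_div,
    sum_mul, ← sum_sub_distrib]
  exact sum_congr rfl fun Y _ => by ring

end HoeffdingCoupling

open HoeffdingCoupling in
theorem sup_without_le_sup_with_general (n u : ℕ) (hun : u ≤ n)
    (H : Finset (Fin n → ℝ)) (hH : H.Nonempty) :
    (∑ Z ∈ (Finset.univ : Finset (Fin n)).powersetCard u,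
        H.sup' hH (fun h => (∑ i ∈ Z, h i) / (u : ℝ) - (∑ i, h i) / (n : ℝ)))
      / (((Finset.univ : Finset (Fin n)).powersetCard u).card : ℝ)
    ≤ (∑ Y : Fin u → Fin n,
        H.sup' hH (fun h => (∑ j, h (Y j)) / (u : ℝ) - (∑ i, h i) / (n : ℝ)))
      / ((n : ℝ) ^ u) := by
  set supZ : Finset (Fin n) → ℝ :=
    fun Z => H.sup' hH (fun h => (∑ i ∈ Z, h i) / (u : ℝ) - (∑ i, h i) / (n : ℝ))
  set supY : (Fin u → Fin n) → ℝ :=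
    fun Y => H.sup' hH (fun h => (∑ j, h (Y j)) / (u : ℝ) - (∑ i, h i) / (n : ℝ))
  set c : ℝ := (n : ℝ) ^ u / n.choose u with hc
  have hu : u ≤ Fintype.card (Fin n) := by rwa [Fintype.card_fin]
  have hZ : ∀ Z ∈ (univ : Finset (Fin n)).powersetCard u,
      c * supZ Z ≤ ∑ Y, couplingWeight u Z Y * supY Y := by
    intro Z hZ
    have hcard := (mem_powersetCard.1 hZ).2
    have hmass : couplingMass u Z = c := by simpa using couplingMass_eq hu hcard
    refine mul_sup'_le_sum_mul_sup' hH (fun Y _ => couplingWeight_nonneg Z Y) fun h _ => ?_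
    rw [sum_couplingWeight_mul_centered hcard, hmass]
  have hsum : c * ∑ Z ∈ (univ : Finset (Fin n)).powersetCard u, supZ Z ≤ ∑ Y, supY Y :=
    mul_sum_le_sum_of_sum_weight_eq_one (fun Y _ => sum_couplingWeight hu Y) hZ
  have hchoose : (0 : ℝ) < n.choose u := by exact_mod_cast Nat.choose_pos hun
  have hpow : (0 : ℝ) < n ^ u := hchoose.trans_le (by exact_mod_cast Nat.choose_le_pow n u)
  rw [card_powersetCard, card_univ, Fintype.card_fin]
  calc _ = c * (∑ Z ∈ (univ : Finset (Fin n)).powersetCard u, supZ Z) / n ^ u := by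
        rw [hc]; field_simp
    _ ≤ _ := by gcongr

/-- Comparison of suprema of centered empirical means under sampling without
replacement vs. with replacement. -/
theorem sup_without_le_sup_with (n u : ℕ) (hn : 0 < n) (hu : 0 < u) (hun : u ≤ n)
    (H : Finset (Fin n → ℝ)) (hH : H.Nonempty) :
    (∑ Z ∈ (Finset.univ : Finset (Fin n)).powersetCard u,
        H.sup' hH (fun h => (∑ i ∈ Z, h i) / (u : ℝ) - (∑ i, h i) / (n : ℝ)))
      / (((Finset.univ : Finset (Fin n)).powersetCard u).card : ℝ)
    ≤ (∑ Y : Fin u → Fin n,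
        H.sup' hH (fun h => (∑ j, h (Y j)) / (u : ℝ) - (∑ i, h i) / (n : ℝ)))
      / ((n : ℝ) ^ u) :=
  sup_without_le_sup_with_general n u hun H hH
end

section
/- Let Z = RANDPERM output: Z(i) for i ∈ [u] generated by the Fisher–Yates style algorithm using independent dᵢ uniform on [i:n]. If d and d^{(i)} agree in every coordinate except coordinate i, then the sets {Z_d(1),...,Z_d(u)} and {Z_{d^{(i)}}(1),...,Z_{d^{(i)}}(u)} differ in at most one element each: |{Z_d} ∖ {Z_{d^{(i)}}}| ≤ 1. -/
/-!
After `k` steps the array of RANDPERM is the product `τ₀ τ₁ ⋯ τₖ₋₁` of the transpositions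
`τⱼ = (j dⱼ)`, and since later transpositions only move points `> j`, the output `Z(j)` is the
value of the full product `τ₀ ⋯ τ_{u-1}` at `j`. Hence the output set is `P τᵢ Q [0, u)`, where
neither `P = τ₀ ⋯ τᵢ₋₁` nor `Q = τᵢ₊₁ ⋯ τ_{u-1}` depends on `dᵢ`, and `Q` fixes `i`. So changing
`dᵢ` only replaces `τᵢ = (i a)` by `(i b)`, and for a finite set `T ∋ i` both `(i a) T` and
`(i b) T` have `|T|` elements and contain `T ∖ {i}`; hence they differ by at most one element.
-/

/-- Swap the values of I at positions a and b. -/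
def swapFun (I : ℕ → ℕ) (a b : ℕ) : ℕ → ℕ :=
  fun x => if x = a then I b else if x = b then I a else I x

/-- State of the array I of RANDPERM before step i (0-indexed), as a function of
the seed vector d. -/
def stateAux (d : ℕ → ℕ) : ℕ → ℕ → ℕ
  | 0 => fun x => x
  | (i + 1) => swapFun (stateAux d (i)) i (d i)

/-- Output of RANDPERM: Z_d(i) = I(d i) at step i. -/
def Zout (d : ℕ → ℕ) (i : ℕ) : ℕ := stateAux d i (d i)

open Finset Equiv

namespace Finset

variable {α : Type*} [DecidableEq α] {s : Finset α} {i : α}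

theorem erase_subset_image_swap (hi : i ∈ s) (a : α) : s.erase i ⊆ s.image (swap i a) := by
  intro x hx
  obtain ⟨hxi, hxs⟩ := mem_erase.1 hx
  refine mem_image.2 ⟨swap i a x, ?_, swap_apply_self i a x⟩
  by_cases hxa : x = a
  · rwa [hxa, swap_apply_right]
  · rwa [swap_apply_of_ne_of_ne hxi hxa]

theorem card_image_swap_sdiff_image_swap_le (hi : i ∈ s) (a b : α) :
    #(s.image (swap i a) \ s.image (swap i b)) ≤ 1 :=
  calc #(s.image (swap i a) \ s.image (swap i b))
      ≤ #(s.image (swap i a) \ s.erase i) :=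
        card_le_card (sdiff_subset_sdiff subset_rfl (erase_subset_image_swap hi b))
    _ = #s - (#s - 1) := by
        rw [card_sdiff_of_subset (erase_subset_image_swap hi a), card_erase_of_mem hi,
          card_image_of_injective _ (swap i a).injective]
    _ ≤ 1 := by omega

end Finset

def swapProd (d : ℕ → ℕ) (a : ℕ) : ℕ → Perm ℕ
  | 0 => 1
  | m + 1 => swapProd d a m * swap (a + m) (d (a + m))

theorem swapProd_add (d : ℕ → ℕ) (a m l : ℕ) :
    swapProd d a (m + l) = swapProd d a m * swapProd d (a + m) l := by
  induction l with
  | zero => simp [swapProd]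
  | succ l ih => rw [← add_assoc, swapProd, ih, swapProd, mul_assoc, add_assoc]

theorem swapProd_congr {d d' : ℕ → ℕ} {a m : ℕ} (h : ∀ j, a ≤ j → j < a + m → d j = d' j) :
    swapProd d a m = swapProd d' a m := by
  induction m with
  | zero => rfl
  | succ m ih =>
    rw [swapProd, swapProd, ih fun j hj hjm => h j hj (by omega), h (a + m) (by omega) (by omega)]

theorem swapProd_apply_of_lt {d : ℕ → ℕ} {a m x : ℕ} (hx : x < a)
    (hd : ∀ j, a ≤ j → j < a + m → j ≤ d j) : swapProd d a m x = x := by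
  induction m with
  | zero => rfl
  | succ m ih =>
    have hdm := hd (a + m) (by omega) (by omega)
    rw [swapProd, Perm.mul_apply, swap_apply_of_ne_of_ne (by omega) (by omega),
      ih fun j hj hjm => hd j hj (by omega)]

theorem swapFun_eq_comp_swap (I : ℕ → ℕ) (a b : ℕ) : swapFun I a b = I ∘ swap a b := by
  funext x
  simp only [swapFun, Function.comp_apply, swap_apply_def]
  split_ifs <;> rfl

theorem stateAux_eq_swapProd (d : ℕ → ℕ) (k : ℕ) : stateAux d k = swapProd d 0 k := by
  induction k with
  | zero => rfl
  | succ k ih => rw [stateAux, swapFun_eq_comp_swap, ih, swapProd, zero_add, Perm.coe_mul]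

theorem Zout_eq_swapProd {d : ℕ → ℕ} {u j : ℕ} (hj : j < u) (hd : ∀ m < u, m ≤ d m) :
    Zout d j = swapProd d 0 u j := by
  obtain ⟨l, rfl⟩ : ∃ l, u = j + 1 + l := ⟨u - (j + 1), by omega⟩
  rw [swapProd_add, zero_add, Perm.mul_apply,
    swapProd_apply_of_lt (by omega) fun m _ hm => hd m hm, swapProd, Perm.mul_apply, zero_add,
    swap_apply_left, Zout, stateAux_eq_swapProd]

theorem image_Zout_eq_image_swapProd {d : ℕ → ℕ} {u : ℕ} (hd : ∀ m < u, m ≤ d m) :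
    (range u).image (Zout d) = (range u).image (swapProd d 0 u) :=
  image_congr fun _ hj => Zout_eq_swapProd (mem_range.1 hj) hd

theorem randperm_single_coord_diff_general (n u : ℕ) (d d' : ℕ → ℕ) (i : ℕ)
    (hiu : i < u)
    (hd : ∀ j < u, j ≤ d j ∧ d j < n) (hd' : ∀ j < u, j ≤ d' j ∧ d' j < n)
    (hagree : ∀ j, j ≠ i → d' j = d j) :
    (((Finset.range u).image (Zout d)) \ ((Finset.range u).image (Zout d'))).card ≤ 1 := by
  obtain ⟨l, rfl⟩ : ∃ l, u = i + 1 + l := ⟨u - (i + 1), by omega⟩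
  have hsplit : ∀ e : ℕ → ℕ, (∀ j < i + 1 + l, j ≤ e j) → (range (i + 1 + l)).image (Zout e) =
      (((range (i + 1 + l)).image (swapProd e (i + 1) l)).image (swap i (e i))).image
        (swapProd e 0 i) := by
    intro e he
    rw [image_Zout_eq_image_swapProd he, swapProd_add, zero_add, swapProd, zero_add, image_image,
      image_image]
    rfl
  have hprefix : swapProd d' 0 i = swapProd d 0 i :=
    swapProd_congr fun j _ hj => hagree j (by omega)
  have hsuffix : swapProd d' (i + 1) l = swapProd d (i + 1) l :=
    swapProd_congr fun j hj _ => hagree j (by omega)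
  rw [hsplit d fun j hj => (hd j hj).1, hsplit d' fun j hj => (hd' j hj).1, hprefix, hsuffix,
    ← image_sdiff _ _ (swapProd d 0 i).injective,
    card_image_of_injective _ (swapProd d 0 i).injective]
  refine card_image_swap_sdiff_image_swap_le (mem_image.2 ⟨i, mem_range.2 (by omega), ?_⟩) _ _
  exact swapProd_apply_of_lt (by omega) fun j hj hjl => by have := (hd j (by omega)).1; omega

/-- If two seed vectors of RANDPERM agree in all coordinates except coordinate i,
then the output sets {Z_d(0..u-1)} and {Z_{d^{(i)}}(0..u-1)} differ in at most one
element. -/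
theorem randperm_single_coord_diff (n u : ℕ) (d d' : ℕ → ℕ) (i : ℕ)
    (hiu : i < u) (hun : u ≤ n)
    (hd : ∀ j < u, j ≤ d j ∧ d j < n) (hd' : ∀ j < u, j ≤ d' j ∧ d' j < n)
    (hagree : ∀ j, j ≠ i → d' j = d j) :
    (((Finset.range u).image (Zout d)) \ ((Finset.range u).image (Zout d'))).card ≤ 1 :=
  randperm_single_coord_diff_general n u d d' i hiu hd hd' hagree
end

section
/- Let K be a positive definite kernel with RKHS H_K, sample x₁,...,xₙ, and let F = { f ∈ span{K(·,xᵢ)} : ‖f‖_{H_K} ≤ μ }. Let Y₁,...,Y_u be i.i.d. uniform on [n] and σᵢ i.i.d. Rademacher. Then for every r > 0 and every 0 ≤ Q ≤ n: E[ sup_{f ∈ F, T_n(f) ≤ r} (1/u) ∑_{i=1}^u σᵢ f(x_{Yᵢ}) ] ≤ √(rQ/u) + μ √( (∑_{q=Q+1}^{n} λ̂_q)/u ), where λ̂₁ ≥ ... ≥ λ̂ₙ are the eigenvalues of (1/n)·(K(xᵢ,xⱼ))_{i,j} and T_n(f) = (1/n)∑ᵢ f(xᵢ)². -/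
open scoped RealInnerProductSpace

open Finset
open scoped BigOperators

/-!
Write `a_q = ⟪f, Φ q⟫` and `v = u⁻¹ ∑ᵢ σᵢ k (Yᵢ)`, which lies in the span of the eigenvectors.
Then `T_n f = ∑_q λ_q a_q²` and the Rademacher average of `f` is `⟪f, v⟫ = ∑_q a_q ⟪Φ q, v⟫`.
Cauchy–Schwarz, weighted by `λ_q` on the top `Q` coordinates and combined with Bessel's inequality
on the rest, bounds it by `√r √(∑_{q<Q} ⟪Φ q, v⟫² / λ_q) + μ √(∑_{q≥Q} ⟪Φ q, v⟫²)` uniformly in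
`f`. Jensen moves the expectation inside the square roots, and `𝔼 ⟪Φ q, v⟫² = λ_q / u` because
`v` is an average of `u` i.i.d. centred terms whose coordinate along `Φ q` has second moment `λ_q`.
-/

section Averages

variable {ι α β : Type*} [Fintype α] [Fintype β]

lemma Fintype.expect_expect_eq_sum_sum_div (F : α → β → ℝ) :
    𝔼 a, 𝔼 b, F a b = (∑ a, ∑ b, F a b) / (Fintype.card α * Fintype.card β) := by
  simp only [Fintype.expect_eq_sum_div_card, ← sum_div, div_div, mul_comm]

lemma Real.expect_sqrt_le_sqrt_expect (s : Finset ι) {X : ι → ℝ} (hX : ∀ i ∈ s, 0 ≤ X i) :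
    𝔼 i ∈ s, √(X i) ≤ √(𝔼 i ∈ s, X i) := by
  rcases s.eq_empty_or_nonempty with rfl | hs
  · simp
  refine Real.le_sqrt_of_sq_le ?_
  calc (𝔼 i ∈ s, √(X i)) ^ 2 = (𝔼 i ∈ s, 1 * √(X i)) ^ 2 := by simp only [one_mul]
    _ ≤ (𝔼 i ∈ s, (1 : ℝ) ^ 2) * 𝔼 i ∈ s, √(X i) ^ 2 := expect_mul_sq_le_sq_mul_sq _ _ _
    _ = 𝔼 i ∈ s, X i := by
      rw [one_pow, expect_const hs, one_mul]
      exact expect_congr rfl fun i hi => Real.sq_sqrt (hX i hi)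

lemma Real.expect_expect_sqrt_le_sqrt_expect_expect {X : α → β → ℝ} (hX : ∀ a b, 0 ≤ X a b) :
    𝔼 a, 𝔼 b, √(X a b) ≤ √(𝔼 a, 𝔼 b, X a b) :=
  calc 𝔼 a, 𝔼 b, √(X a b) ≤ 𝔼 a, √(𝔼 b, X a b) :=
        expect_le_expect fun a _ => Real.expect_sqrt_le_sqrt_expect _ fun b _ => hX a b
    _ ≤ √(𝔼 a, 𝔼 b, X a b) :=
        Real.expect_sqrt_le_sqrt_expect _ fun a _ => expect_nonneg fun b _ => hX a b

lemma expect_sq_sum_comp_eq_mul_expect_sq [Nonempty β] {g : β → ℝ} (hg : 𝔼 b, g b = 0) (u : ℕ) :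
    𝔼 z : Fin u → β, (∑ i, g (z i)) ^ 2 = u * 𝔼 b, g b ^ 2 := by
  induction u with
  | zero => simp
  | succ m ih =>
    calc 𝔼 z : Fin (m + 1) → β, (∑ i, g (z i)) ^ 2
        = 𝔼 b, 𝔼 w : Fin m → β, (g b + ∑ i, g (w i)) ^ 2 := by
          rw [← Finset.expect_product', Finset.univ_product_univ]
          refine (Fintype.expect_equiv (Fin.consEquiv fun _ => β) _ _ fun p => ?_).symm
          simp [Fin.sum_univ_succ, Fin.consEquiv]
      _ = 𝔼 b, (g b ^ 2 + g b * (2 * 𝔼 w : Fin m → β, ∑ i, g (w i))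
            + 𝔼 w : Fin m → β, (∑ i, g (w i)) ^ 2) := by
          refine expect_congr rfl fun b _ => ?_
          simp only [add_sq, expect_add_distrib, ← mul_expect, Fintype.expect_const]
          ring
      _ = (m + 1 : ℕ) * 𝔼 b, g b ^ 2 := by
          simp only [expect_add_distrib, ← expect_mul, hg, zero_mul, add_zero, ih,
            Fintype.expect_const]
          push_cast
          ring

lemma expect_expect_sq_sum_sign_mul [Nonempty α] (c : α → ℝ) (u : ℕ) :
    𝔼 Y : Fin u → α, 𝔼 σ : Fin u → Bool, (∑ i, (if σ i then (1 : ℝ) else -1) * c (Y i)) ^ 2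
      = u * 𝔼 a, c a ^ 2 := by
  set g : α × Bool → ℝ := fun p => (if p.2 then (1 : ℝ) else -1) * c p.1
  have hg : 𝔼 p, g p = 0 := by
    rw [← Finset.univ_product_univ, Finset.expect_product]
    simp only [g, Fintype.expect_eq_sum_div_card (ι := Bool), Fintype.sum_bool]
    simp
  have hg2 : 𝔼 p, g p ^ 2 = 𝔼 a, c a ^ 2 := by
    rw [← Finset.univ_product_univ, Finset.expect_product]
    simp [g]
  rw [← hg2, ← expect_sq_sum_comp_eq_mul_expect_sq hg, ← Finset.expect_product',
    Finset.univ_product_univ]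
  exact Fintype.expect_equiv (Equiv.arrowProdEquivProdArrow _ _ _).symm _ _ fun _ => rfl

end Averages

lemma sum_mul_le_sqrt_mul_sqrt_add_mul_sqrt {ι : Type*} [Fintype ι] [DecidableEq ι]
    (s : Finset ι) {a b lam : ι → ℝ} {r μ : ℝ} (hlam : ∀ i, 0 < lam i)
    (hr : ∑ i, lam i * a i ^ 2 ≤ r) (hμ : √(∑ i, a i ^ 2) ≤ μ) :
    ∑ i, a i * b i ≤ √r * √(∑ i ∈ sᶜ, b i ^ 2 / lam i) + μ * √(∑ i ∈ s, b i ^ 2) := by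
  rw [← sum_add_sum_compl s, add_comm]
  gcongr ?_ + ?_
  · calc ∑ i ∈ sᶜ, a i * b i = ∑ i ∈ sᶜ, (√(lam i) * a i) * (b i / √(lam i)) := by
          refine sum_congr rfl fun i _ => ?_
          field_simp [(Real.sqrt_pos.2 (hlam i)).ne']
      _ ≤ √(∑ i ∈ sᶜ, (√(lam i) * a i) ^ 2) * √(∑ i ∈ sᶜ, (b i / √(lam i)) ^ 2) :=
          Real.sum_mul_le_sqrt_mul_sqrt _ _ _
      _ = √(∑ i ∈ sᶜ, lam i * a i ^ 2) * √(∑ i ∈ sᶜ, b i ^ 2 / lam i) := by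
          simp only [mul_pow, div_pow, Real.sq_sqrt (hlam _).le]
      _ ≤ √r * √(∑ i ∈ sᶜ, b i ^ 2 / lam i) := by
          gcongr
          exact (sum_le_univ_sum_of_nonneg fun i => mul_nonneg (hlam i).le (sq_nonneg _)).trans hr
  · calc ∑ i ∈ s, a i * b i ≤ √(∑ i ∈ s, a i ^ 2) * √(∑ i ∈ s, b i ^ 2) :=
          Real.sum_mul_le_sqrt_mul_sqrt _ _ _
      _ ≤ μ * √(∑ i ∈ s, b i ^ 2) := by
          gcongr
          exact (Real.sqrt_le_sqrt (sum_le_univ_sum_of_nonneg fun i => sq_nonneg _)).trans hμ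

section Orthonormal

variable {H ι : Type*} [NormedAddCommGroup H] [InnerProductSpace ℝ H] [Fintype ι] {Φ : ι → H}

theorem Orthonormal.inner_eq_sum_inner_mul_inner (hΦ : Orthonormal ℝ Φ) (f : H) {v : H}
    (hv : v ∈ Submodule.span ℝ (Set.range Φ)) : ⟪f, v⟫ = ∑ q, ⟪f, Φ q⟫ * ⟪Φ q, v⟫ := by
  obtain ⟨d, rfl⟩ := (Submodule.mem_span_range_iff_exists_fun ℝ).1 hv
  simp only [hΦ.inner_right_fintype, inner_sum, real_inner_smul_right, mul_comm]

theorem Orthonormal.inner_le_of_mem_span [DecidableEq ι] (hΦ : Orthonormal ℝ Φ) {lam : ι → ℝ}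
    (hlam : ∀ q, 0 < lam q) (s : Finset ι) {f v : H} {r μ : ℝ}
    (hv : v ∈ Submodule.span ℝ (Set.range Φ)) (hf : ‖f‖ ≤ μ)
    (hfr : ∑ q, lam q * ⟪f, Φ q⟫ ^ 2 ≤ r) :
    ⟪f, v⟫ ≤ √r * √(∑ q ∈ sᶜ, ⟪Φ q, v⟫ ^ 2 / lam q) + μ * √(∑ q ∈ s, ⟪Φ q, v⟫ ^ 2) := by
  have hbessel : ∑ q, ⟪f, Φ q⟫ ^ 2 ≤ ‖f‖ ^ 2 := by
    simpa only [real_inner_comm, Real.norm_eq_abs, sq_abs] using hΦ.sum_inner_products_le f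
  rw [hΦ.inner_eq_sum_inner_mul_inner f hv]
  refine sum_mul_le_sqrt_mul_sqrt_add_mul_sqrt s hlam hfr ?_
  exact (Real.sqrt_le_sqrt hbessel).trans ((Real.sqrt_sq (norm_nonneg f)).trans_le hf)

end Orthonormal

section EmpiricalCovariance

variable {H : Type*} [NormedAddCommGroup H] [InnerProductSpace ℝ H] {n u : ℕ}
  {k Φ : Fin n → H} {lam : Fin n → ℝ}

lemma empirical_inner_mul_inner_eq
    (heig : ∀ q, (1 / (n : ℝ)) • (∑ i, ⟪Φ q, k i⟫ • k i) = lam q • Φ q) (q : Fin n) (f : H) :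
    (1 / (n : ℝ)) * ∑ i, ⟪Φ q, k i⟫ * ⟪f, k i⟫ = lam q * ⟪f, Φ q⟫ := by
  simpa only [real_inner_smul_right, inner_sum] using congrArg (⟪f, ·⟫) (heig q)

lemma empirical_sq_eq_sum_mul_sq (horth : Orthonormal ℝ Φ)
    (heig : ∀ q, (1 / (n : ℝ)) • (∑ i, ⟪Φ q, k i⟫ • k i) = lam q • Φ q)
    (hΦspan : ∀ i, k i ∈ Submodule.span ℝ (Set.range Φ)) (f : H) :
    (1 / (n : ℝ)) * ∑ i, ⟪f, k i⟫ ^ 2 = ∑ q, lam q * ⟪f, Φ q⟫ ^ 2 :=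
  calc (1 / (n : ℝ)) * ∑ i, ⟪f, k i⟫ ^ 2
      = (1 / (n : ℝ)) * ∑ i, (∑ q, ⟪f, Φ q⟫ * ⟪Φ q, k i⟫) * ⟪f, k i⟫ := by
        simp only [sq, ← horth.inner_eq_sum_inner_mul_inner f (hΦspan _)]
    _ = ∑ q, ⟪f, Φ q⟫ * ((1 / (n : ℝ)) * ∑ i, ⟪Φ q, k i⟫ * ⟪f, k i⟫) := by
        simp only [sum_mul, mul_sum, mul_assoc, mul_left_comm]
        exact sum_comm
    _ = ∑ q, lam q * ⟪f, Φ q⟫ ^ 2 := by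
        simp only [empirical_inner_mul_inner_eq heig]
        exact sum_congr rfl fun q _ => by ring

variable (k) in
noncomputable def rademacherVector (Y : Fin u → Fin n) (σ : Fin u → Bool) : H :=
  (u : ℝ)⁻¹ • ∑ i, (if σ i then (1 : ℝ) else -1) • k (Y i)

lemma inner_rademacherVector (f : H) (Y : Fin u → Fin n) (σ : Fin u → Bool) :
    ⟪f, rademacherVector k Y σ⟫ = (∑ i, (if σ i then (1 : ℝ) else -1) * ⟪f, k (Y i)⟫) / u := by
  simp only [rademacherVector, real_inner_smul_right, inner_sum, div_eq_inv_mul]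

lemma rademacherVector_mem_span (hΦspan : ∀ i, k i ∈ Submodule.span ℝ (Set.range Φ))
    (Y : Fin u → Fin n) (σ : Fin u → Bool) :
    rademacherVector k Y σ ∈ Submodule.span ℝ (Set.range Φ) :=
  Submodule.smul_mem _ _ (sum_mem fun _ _ => Submodule.smul_mem _ _ (hΦspan _))

lemma expect_expect_inner_rademacherVector_sq (horth : Orthonormal ℝ Φ)
    (heig : ∀ q, (1 / (n : ℝ)) • (∑ i, ⟪Φ q, k i⟫ • k i) = lam q • Φ q) (q : Fin n) :
    𝔼 Y : Fin u → Fin n, 𝔼 σ : Fin u → Bool, ⟪Φ q, rademacherVector k Y σ⟫ ^ 2 = lam q / u := by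
  have : Nonempty (Fin n) := ⟨q⟩
  have hvar : 𝔼 j, ⟪Φ q, k j⟫ ^ 2 = lam q := by
    have := empirical_inner_mul_inner_eq heig q (Φ q)
    rw [real_inner_self_eq_norm_sq, horth.1 q] at this
    simpa [Fintype.expect_eq_sum_div_card, sq, div_eq_inv_mul] using this
  simp only [inner_rademacherVector, div_pow, ← expect_div]
  rw [expect_expect_sq_sum_sign_mul (fun j => ⟪Φ q, k j⟫) u, hvar]
  rcases eq_or_ne (u : ℝ) 0 with hu | hu
  · simp [hu]
  · field_simp

lemma expect_expect_sum_inner_rademacherVector_sq_div (hlam : ∀ q, 0 < lam q)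
    (horth : Orthonormal ℝ Φ)
    (heig : ∀ q, (1 / (n : ℝ)) • (∑ i, ⟪Φ q, k i⟫ • k i) = lam q • Φ q) (s : Finset (Fin n)) :
    𝔼 Y : Fin u → Fin n, 𝔼 σ : Fin u → Bool,
        ∑ q ∈ s, ⟪Φ q, rademacherVector k Y σ⟫ ^ 2 / lam q = #s / u :=
  calc _ = ∑ q ∈ s, lam q / u / lam q := by
        simp only [expect_sum_comm, ← expect_div,
          expect_expect_inner_rademacherVector_sq horth heig]
    _ = #s / u := by
        rw [sum_congr rfl fun q _ => div_div_cancel_left' (hlam q).ne', sum_const, nsmul_eq_mul,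
          div_eq_mul_inv]

lemma expect_expect_sum_inner_rademacherVector_sq (horth : Orthonormal ℝ Φ)
    (heig : ∀ q, (1 / (n : ℝ)) • (∑ i, ⟪Φ q, k i⟫ • k i) = lam q • Φ q) (s : Finset (Fin n)) :
    𝔼 Y : Fin u → Fin n, 𝔼 σ : Fin u → Bool, ∑ q ∈ s, ⟪Φ q, rademacherVector k Y σ⟫ ^ 2
      = (∑ q ∈ s, lam q) / u := by
  simp only [expect_sum_comm, expect_expect_inner_rademacherVector_sq horth heig, sum_div]

end EmpiricalCovariance

theorem kernel_local_rademacher_bound_general {H : Type*} [NormedAddCommGroup H]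
    [InnerProductSpace ℝ H]
    (n u : ℕ)
    (k : Fin n → H) (Φ : Fin n → H) (lam : Fin n → ℝ)
    (hlam : ∀ q, 0 < lam q)
    (horth : Orthonormal ℝ Φ)
    (heig : ∀ q, (1 / (n : ℝ)) • (∑ i, ⟪Φ q, k i⟫ • k i) = lam q • Φ q)
    (hΦspan : ∀ i, k i ∈ Submodule.span ℝ (Set.range Φ))
    (μ r : ℝ) (hμ : 0 ≤ μ) (Q : ℕ) :
    (∑ Y : Fin u → Fin n, ∑ σ : Fin u → Bool,
        sSup {x : ℝ | ∃ f : H, f ∈ Submodule.span ℝ (Set.range k) ∧ ‖f‖ ≤ μ ∧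
          (1 / (n : ℝ)) * ∑ i, ⟪f, k i⟫ ^ 2 ≤ r ∧
          x = (∑ i, (if σ i then (1 : ℝ) else -1) * ⟪f, k (Y i)⟫) / (u : ℝ)})
      / ((n : ℝ) ^ u * 2 ^ u)
    ≤ Real.sqrt (r * Q / u)
      + μ * Real.sqrt ((∑ q ∈ Finset.univ.filter (fun q : Fin n => Q ≤ (q : ℕ)), lam q)
          / (u : ℝ)) := by
  set S := univ.filter fun q : Fin n => Q ≤ (q : ℕ)
  set head := fun Y σ => ∑ q ∈ Sᶜ, ⟪Φ q, rademacherVector k (u := u) Y σ⟫ ^ 2 / lam q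
  set tail := fun Y σ => ∑ q ∈ S, ⟪Φ q, rademacherVector k (u := u) Y σ⟫ ^ 2
  have hcard : (n : ℝ) ^ u * 2 ^ u
      = Fintype.card (Fin u → Fin n) * Fintype.card (Fin u → Bool) := by simp
  rw [hcard, ← Fintype.expect_expect_eq_sum_sum_div]
  calc _ ≤ 𝔼 Y, 𝔼 σ, (√r * √(head Y σ) + μ * √(tail Y σ)) := by
        refine expect_le_expect fun Y _ => expect_le_expect fun σ _ => ?_
        refine Real.sSup_le ?_ (add_nonneg (by positivity) (mul_nonneg hμ (Real.sqrt_nonneg _)))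
        rintro _ ⟨f, -, hf, hfr, rfl⟩
        rw [empirical_sq_eq_sum_mul_sq horth heig hΦspan] at hfr
        rw [← inner_rademacherVector]
        exact horth.inner_le_of_mem_span hlam S (rademacherVector_mem_span hΦspan Y σ) hf hfr
    _ = √r * 𝔼 Y, 𝔼 σ, √(head Y σ) + μ * 𝔼 Y, 𝔼 σ, √(tail Y σ) := by
        simp only [expect_add_distrib, mul_expect]
    _ ≤ √r * √(#Sᶜ / u) + μ * √((∑ q ∈ S, lam q) / u) := by
        rw [← expect_expect_sum_inner_rademacherVector_sq_div hlam horth heig,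
          ← expect_expect_sum_inner_rademacherVector_sq horth heig]
        gcongr
        · exact Real.expect_expect_sqrt_le_sqrt_expect_expect fun Y σ =>
            sum_nonneg fun q _ => div_nonneg (sq_nonneg _) (hlam q).le
        · exact Real.expect_expect_sqrt_le_sqrt_expect_expect fun Y σ => by positivity
    _ ≤ _ := by
        rw [mul_div_assoc, Real.sqrt_mul' r (by positivity)]
        gcongr
        rw [compl_filter]
        simpa using (Fin.card_filter_val_lt (n := n) (m := Q)).trans_le (min_le_right n Q)

/-- Kernel local Rademacher complexity bound: the Rademacher average of the
localized RKHS ball {f : ‖f‖ ≤ μ, T_n(f) ≤ r} is bounded by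
√(rQ/u) + μ√((∑_{q>Q} λ̂_q)/u) for every 0 ≤ Q ≤ n. -/
theorem kernel_local_rademacher_bound {H : Type*} [NormedAddCommGroup H]
    [InnerProductSpace ℝ H]
    (n u : ℕ) (hn : 0 < n) (hu : 0 < u)
    (k : Fin n → H) (Φ : Fin n → H) (lam : Fin n → ℝ)
    (hlam : ∀ q, 0 < lam q)
    (hmono : ∀ p q : Fin n, p ≤ q → lam q ≤ lam p)
    (horth : Orthonormal ℝ Φ)
    (heig : ∀ q, (1 / (n : ℝ)) • (∑ i, ⟪Φ q, k i⟫ • k i) = lam q • Φ q)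
    (hΦspan : ∀ i, k i ∈ Submodule.span ℝ (Set.range Φ))
    (μ r : ℝ) (hμ : 0 ≤ μ) (hr : 0 < r) (Q : ℕ) (hQ : Q ≤ n) :
    (∑ Y : Fin u → Fin n, ∑ σ : Fin u → Bool,
        sSup {x : ℝ | ∃ f : H, f ∈ Submodule.span ℝ (Set.range k) ∧ ‖f‖ ≤ μ ∧
          (1 / (n : ℝ)) * ∑ i, ⟪f, k i⟫ ^ 2 ≤ r ∧
          x = (∑ i, (if σ i then (1 : ℝ) else -1) * ⟪f, k (Y i)⟫) / (u : ℝ)})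
      / ((n : ℝ) ^ u * 2 ^ u)
    ≤ Real.sqrt (r * Q / u)
      + μ * Real.sqrt ((∑ q ∈ Finset.univ.filter (fun q : Fin n => Q ≤ (q : ℕ)), lam q)
          / (u : ℝ)) :=
  kernel_local_rademacher_bound_general n u k Φ lam hlam horth heig hΦspan μ r hμ Q
end

section
/- Let g : ℝ → ℝ be L-Lipschitz and H a class of functions on [n]. Then the inductive Rademacher complexity satisfies E[ sup_{h∈H} (1/u) ∑_{i=1}^u σᵢ g(h(Yᵢ)) ] ≤ L · E[ sup_{h∈H} (1/u) ∑_{i=1}^u σᵢ h(Yᵢ) ], where σᵢ are i.i.d. Rademacher and Y₁,...,Y_u are i.i.d. uniform on [n], independent of σ, and g(0) = 0. -/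
/-!
Sum over the first sign and condition on the others: the two choices contribute
`sup (c + φ) + sup (c - φ)` with `φ h = g (f h 0)`. Evaluated at maximisers `a` of the first
and `b` of the second term this is `c a + c b + (φ a - φ b)`, and
`φ a - φ b ≤ L |f a 0 - f b 0|`;
according to the sign of `f a 0 - f b 0`, the right side is attained by `(a, b)` or `(b, a)` in
`sup (c + L f 0) + sup (c - L f 0)`. So `g` can be traded for `L · id` one coordinate at a time,
and the normalisations by `u` and by `n ^ u * 2 ^ u` are monotone.
-/

open Finset

namespace Finset

variable {α : Type*} {s : Finset α} (hs : s.Nonempty)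

theorem mul_sup'_of_nonneg {R : Type*} [Semiring R] [LinearOrder R] [IsOrderedRing R] {L : R}
    (hL : 0 ≤ L) (f : α → R) :
    L * s.sup' hs f = s.sup' hs (fun h => L * f h) :=
  apply_sup'_eq_sup'_comp hs (L * ·) fun _ _ => (monotone_mul_left_of_nonneg hL).map_sup _ _

theorem sup'_div_of_nonneg {K : Type*} [Field K] [LinearOrder K] [IsOrderedRing K] {u : K}
    (hu : 0 ≤ u) (f : α → K) :
    s.sup' hs f / u = s.sup' hs (fun h => f h / u) :=
  apply_sup'_eq_sup'_comp hs (· / u) fun _ _ =>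
    Monotone.map_sup (fun _ _ h => div_le_div_of_nonneg_right h hu) _ _

theorem sup'_add_add_sup'_sub_le (c φ ψ : α → ℝ)
    (hφψ : ∀ a ∈ s, ∀ b ∈ s, φ a - φ b ≤ |ψ a - ψ b|) :
    s.sup' hs (fun h => c h + φ h) + s.sup' hs (fun h => c h - φ h)
      ≤ s.sup' hs (fun h => c h + ψ h) + s.sup' hs (fun h => c h - ψ h) := by
  obtain ⟨a, ha, hmax_a⟩ := exists_mem_eq_sup' hs (fun h => c h + φ h)
  obtain ⟨b, hb, hmax_b⟩ := exists_mem_eq_sup' hs (fun h => c h - φ h)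
  rw [hmax_a, hmax_b]
  have hab := hφψ a ha b hb
  have hpa := le_sup' (fun h => c h + ψ h) ha
  have hpb := le_sup' (fun h => c h + ψ h) hb
  have hma := le_sup' (fun h => c h - ψ h) ha
  have hmb := le_sup' (fun h => c h - ψ h) hb
  rcases abs_cases (ψ a - ψ b) with ⟨habs, -⟩ | ⟨habs, -⟩ <;> linarith

theorem sum_sup'_rademacher_succ {u : ℕ} (c : α → ℝ) (x : α → Fin (u + 1) → ℝ) :
    ∑ σ : Fin (u + 1) → Bool,
        s.sup' hs (fun h => c h + ∑ i, (if σ i then (1 : ℝ) else -1) * x h i)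
      = ∑ τ : Fin u → Bool,
        (s.sup' hs (fun h => c h + x h 0 + ∑ i, (if τ i then (1 : ℝ) else -1) * x h i.succ)
          + s.sup' hs
              (fun h => c h - x h 0 + ∑ i, (if τ i then (1 : ℝ) else -1) * x h i.succ)) := by
  rw [← (Fin.consEquiv fun _ => Bool).sum_comp, Fintype.sum_prod_type, Fintype.sum_bool,
    ← sum_add_distrib]
  congr! 3 with τ - h - h <;> simp [Fin.consEquiv, Fin.sum_univ_succ] <;> ring

theorem sum_sup'_rademacher_le_of_sub_le_abs_sub {u : ℕ} (x y : α → Fin u → ℝ)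
    (hxy : ∀ i, ∀ a ∈ s, ∀ b ∈ s, x a i - x b i ≤ |y a i - y b i|) (c : α → ℝ) :
    ∑ σ : Fin u → Bool,
        s.sup' hs (fun h => c h + ∑ i, (if σ i then (1 : ℝ) else -1) * x h i)
      ≤ ∑ σ : Fin u → Bool,
          s.sup' hs (fun h => c h + ∑ i, (if σ i then (1 : ℝ) else -1) * y h i) := by
  induction u generalizing c with
  | zero => rfl
  | succ u ih =>
    have ih_tail := ih (fun h i => x h i.succ) (fun h i => y h i.succ) (fun i => hxy i.succ)
    rw [sum_sup'_rademacher_succ, sum_sup'_rademacher_succ, sum_add_distrib]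
    calc _ ≤ _ := add_le_add (ih_tail fun h => c h + x h 0) (ih_tail fun h => c h - x h 0)
      _ = _ := sum_add_distrib.symm
      _ ≤ _ := sum_le_sum fun τ _ => by
        simpa only [add_right_comm _ (x _ 0), sub_add_eq_add_sub, add_right_comm _ (y _ 0)]
          using sup'_add_add_sup'_sub_le hs
            (fun h => c h + ∑ i, (if τ i then (1 : ℝ) else -1) * y h i.succ)
            (fun h => x h 0) (fun h => y h 0) (hxy 0)

theorem sum_sup'_rademacher_comp_le {u : ℕ} {L : ℝ} (hL : 0 ≤ L) {g : ℝ → ℝ}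
    (hg : ∀ x y, |g x - g y| ≤ L * |x - y|) (f : α → Fin u → ℝ) :
    ∑ σ : Fin u → Bool,
        s.sup' hs (fun h => ∑ i, (if σ i then (1 : ℝ) else -1) * g (f h i))
      ≤ L * ∑ σ : Fin u → Bool,
          s.sup' hs (fun h => ∑ i, (if σ i then (1 : ℝ) else -1) * f h i) := by
  have hcomp := sum_sup'_rademacher_le_of_sub_le_abs_sub hs (fun h i => g (f h i))
    (fun h i => L * f h i)
    (fun i a _ b _ => by
      rw [← mul_sub, abs_mul, abs_of_nonneg hL]
      exact (le_abs_self _).trans (hg _ _)) 0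
  simp only [Pi.zero_apply, zero_add, mul_left_comm _ L, ← mul_sum] at hcomp
  simpa only [mul_sum, mul_sup'_of_nonneg hs hL] using hcomp

end Finset

theorem rademacher_contraction_general (n u : ℕ)
    (L : ℝ) (hL : 0 ≤ L) (g : ℝ → ℝ)
    (hg : ∀ x y, |g x - g y| ≤ L * |x - y|)
    (H : Finset (Fin n → ℝ)) (hH : H.Nonempty) :
    (∑ Y : Fin u → Fin n, ∑ σ : Fin u → Bool,
        H.sup' hH (fun h => (∑ i, (if σ i then (1 : ℝ) else -1) * g (h (Y i))) / (u : ℝ)))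
      / ((n : ℝ) ^ u * 2 ^ u)
    ≤ L * ((∑ Y : Fin u → Fin n, ∑ σ : Fin u → Bool,
          H.sup' hH (fun h => (∑ i, (if σ i then (1 : ℝ) else -1) * h (Y i)) / (u : ℝ)))
        / ((n : ℝ) ^ u * 2 ^ u)) := by
  simp only [← sup'_div_of_nonneg hH u.cast_nonneg, ← sum_div]
  rw [← mul_div_assoc, ← mul_div_assoc, mul_sum]
  gcongr with Y
  exact sum_sup'_rademacher_comp_le hH hL hg fun h i => h (Y i)

/-- Ledoux–Talagrand contraction for Rademacher averages: if g is L-Lipschitz with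
g(0) = 0, then the Rademacher complexity of g ∘ H is at most L times that of H. -/
theorem rademacher_contraction (n u : ℕ) (hn : 0 < n) (hu : 0 < u)
    (L : ℝ) (hL : 0 ≤ L) (g : ℝ → ℝ)
    (hg : ∀ x y, |g x - g y| ≤ L * |x - y|) (hg0 : g 0 = 0)
    (H : Finset (Fin n → ℝ)) (hH : H.Nonempty) :
    (∑ Y : Fin u → Fin n, ∑ σ : Fin u → Bool,
        H.sup' hH (fun h => (∑ i, (if σ i then (1 : ℝ) else -1) * g (h (Y i))) / (u : ℝ)))
      / ((n : ℝ) ^ u * 2 ^ u)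
    ≤ L * ((∑ Y : Fin u → Fin n, ∑ σ : Fin u → Bool,
          H.sup' hH (fun h => (∑ i, (if σ i then (1 : ℝ) else -1) * h (Y i)) / (u : ℝ)))
        / ((n : ℝ) ^ u * 2 ^ u)) :=
  rademacher_contraction_general n u L hL g hg H hH
end
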